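/- Let $n$ be odd, let $v_1,\ldots,v_n$ be nonzero vectors in $\mathbb{R}^d$ with $\|v_i\|_2 \le 1$, and let $\varepsilon_1,\ldots,\varepsilon_n$ be independent Rademacher variables. Then $\mathbb{P}(v_1\varepsilon_1 + \cdots + v_n\varepsilon_n = 0) \le \mathbb{P}(\tfrac12 R_{n-1} + \varepsilon_n = 0)$, where $R_{n-1} = \varepsilon_1 + \cdots + \varepsilon_{n-1}$. -/

import Mathlib

/-!
Almost surely the signs form one of the `2ⁿ` patterns in `{±1}ⁿ`, each of probability `2⁻ⁿ`, so
both events are measured by counting the patterns `σ` with `∑ σ j • w j = 0`, for `w = v` and for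
the weights `(1/2, …, 1/2, 1)`; the latter are annihilated by exactly `2 C(2m, m + 1)` patterns,
where `n = 2m + 1`. For `v`, choose `u` with `⟪u, v j⟫ ≠ 0` for all `j`: the patterns annihilating
`v` annihilate the weights `⟪u, v j⟫`, and flipping the signs of the negative weights makes all
weights positive without changing the count. Encoding a pattern by the set of its `+1`
coordinates, for positive weights these sets form an antichain closed under complement. Its
members of size at most `m` form an intersecting antichain, which pushing up level by level
(local LYM) and Erdős–Ko–Rado bound by `C(2m, m - 1) = C(2m, m + 1)`.
-/

open MeasureTheory ProbabilityTheory

/-- A Rademacher random variable takes values `1` and `-1` each with probability `1/2`. -/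
def IsRademacher {Ω : Type*} [MeasurableSpace Ω] (μ : Measure Ω) (f : Ω → ℝ) : Prop :=
  μ {ω | f ω = 1} = 1 / 2 ∧ μ {ω | f ω = -1} = 1 / 2

open Finset
open scoped FinsetFamily symmDiff RealInnerProductSpace

section IntersectingAntichain

variable {α : Type*} [Fintype α] [DecidableEq α]

theorem card_le_card_upShadow_of_sized {𝒜 : Finset (Finset α)} {r : ℕ}
    (h𝒜 : (𝒜 : Set (Finset α)).Sized r) (hr : 2 * r < Fintype.card α) : #𝒜 ≤ #(∂⁺ 𝒜) := by
  have hcompls : (𝒜ᶜˢ : Set (Finset α)).Sized (Fintype.card α - r) := by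
    simpa using h𝒜.compls
  have hlym := local_lubell_yamamoto_meshalkin_inequality_mul hcompls
  rw [shadow_compls, card_compls, card_compls,
    show Fintype.card α - (Fintype.card α - r) + 1 = r + 1 by omega] at hlym
  exact Nat.le_of_mul_le_mul_right
    ((Nat.mul_le_mul_left _ (by omega : r + 1 ≤ Fintype.card α - r)).trans hlym) (by omega)

/-- Replacing the members of size `j` of an intersecting antichain by their upper shadow keeps it an
intersecting antichain and, by local LYM, does not decrease its size. -/
theorem exists_card_le_of_isAntichain_of_intersecting {𝒜 : Finset (Finset α)} {j m : ℕ}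
    (hanti : IsAntichain (· ⊆ ·) (𝒜 : Set (Finset α))) (hint : (𝒜 : Set (Finset α)).Intersecting)
    (hj : ∀ A ∈ 𝒜, j ≤ #A) (hm : ∀ A ∈ 𝒜, #A ≤ m) (hjm : j < m) (hmα : 2 * m < Fintype.card α) :
    ∃ ℬ : Finset (Finset α), IsAntichain (· ⊆ ·) (ℬ : Set (Finset α)) ∧
      (ℬ : Set (Finset α)).Intersecting ∧ (∀ B ∈ ℬ, j + 1 ≤ #B) ∧ (∀ B ∈ ℬ, #B ≤ m) ∧
      #𝒜 ≤ #ℬ := by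
  set 𝒞 := 𝒜 \ 𝒜 # j
  have h𝒞 : ∀ C ∈ 𝒞, C ∈ 𝒜 ∧ j + 1 ≤ #C := fun C hC => by
    obtain ⟨hC, hCj⟩ := mem_sdiff.1 hC
    have : #C ≠ j := fun h => hCj (mem_slice.2 ⟨hC, h⟩)
    exact ⟨hC, by have := hj C hC; omega⟩
  have hshadow : ((∂⁺ (𝒜 # j) : Finset (Finset α)) : Set (Finset α)).Sized (j + 1) :=
    (sized_slice (𝒜 := 𝒜)).upShadow
  have hbelow : ∀ B ∈ 𝒞 ∪ ∂⁺ (𝒜 # j), ∃ A ∈ 𝒜, A ⊆ B := by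
    intro B hB
    rcases mem_union.1 hB with hB | hB
    · exact ⟨B, (h𝒞 B hB).1, subset_rfl⟩
    · obtain ⟨A, hA, hAB⟩ := exists_subset_of_mem_upShadow hB
      exact ⟨A, slice_subset hA, hAB⟩
  have hdisj : Disjoint 𝒞 (∂⁺ (𝒜 # j)) := by
    refine disjoint_left.2 fun C hC hC' => ?_
    obtain ⟨A, hA, hAC⟩ := exists_subset_of_mem_upShadow hC'
    obtain ⟨hA, hAj⟩ := mem_slice.1 hA
    exact hanti hA (h𝒞 C hC).1 (by rintro rfl; have := hshadow hC'; omega) hAC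
  refine ⟨𝒞 ∪ ∂⁺ (𝒜 # j), ?_, ?_, ?_, ?_, ?_⟩
  · intro B hB B' hB' hne hBB'
    have hlt : #B < #B' := card_lt_card (ssubset_of_subset_of_ne hBB' hne)
    obtain ⟨A, hA, hAB⟩ := hbelow B hB
    have hB'𝒞 : B' ∈ 𝒞 := by
      rcases mem_union.1 hB' with h | h
      · exact h
      · have := hshadow h
        rcases mem_union.1 hB with hB | hB
        · have := (h𝒞 B hB).2; omega
        · have := hshadow hB; omega
    exact hanti hA (h𝒞 B' hB'𝒞).1 (by rintro rfl; exact hne (hBB'.antisymm hAB))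
      (hAB.trans hBB')
  · intro B hB B' hB' hBB'
    obtain ⟨A, hA, hAB⟩ := hbelow B hB
    obtain ⟨A', hA', hAB'⟩ := hbelow B' hB'
    exact hint hA hA' (hBB'.mono hAB hAB')
  · intro B hB
    rcases mem_union.1 hB with hB | hB
    · exact (h𝒞 B hB).2
    · exact (hshadow hB).ge
  · intro B hB
    rcases mem_union.1 hB with hB | hB
    · exact hm B (h𝒞 B hB).1
    · rw [hshadow hB]; omega
  · have hsplit : #𝒞 + #(𝒜 # j) = #𝒜 := card_sdiff_add_card_eq_card slice_subset
    rw [card_union_of_disjoint hdisj]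
    have := card_le_card_upShadow_of_sized (sized_slice (𝒜 := 𝒜) (r := j)) (by omega)
    omega

end IntersectingAntichain

theorem card_le_choose_of_isAntichain_of_intersecting {n m : ℕ} {𝒜 : Finset (Finset (Fin n))}
    (hanti : IsAntichain (· ⊆ ·) (𝒜 : Set (Finset (Fin n))))
    (hint : (𝒜 : Set (Finset (Fin n))).Intersecting) (hm : ∀ A ∈ 𝒜, #A ≤ m) (hmn : 2 * m < n) :
    #𝒜 ≤ (n - 1).choose (m - 1) := by
  suffices key : ∀ k (𝒜 : Finset (Finset (Fin n))), IsAntichain (· ⊆ ·) (𝒜 : Set (Finset (Fin n))) →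
      (𝒜 : Set (Finset (Fin n))).Intersecting → (∀ A ∈ 𝒜, m - k ≤ #A) → (∀ A ∈ 𝒜, #A ≤ m) →
      #𝒜 ≤ (n - 1).choose (m - 1) from
    key m 𝒜 hanti hint (fun A _ => by omega) hm
  intro k
  induction k with
  | zero =>
    intro 𝒜 hanti hint hk hm
    exact erdos_ko_rado hint (fun A hA => le_antisymm (hm A hA) (hk A hA)) (by omega)
  | succ k ih =>
    intro 𝒜 hanti hint hk hm
    by_cases hkm : m ≤ k
    · exact ih 𝒜 hanti hint (fun A hA => by have := hk A hA; omega) hm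
    obtain ⟨ℬ, hℬanti, hℬint, hℬk, hℬm, hcard⟩ :=
      exists_card_le_of_isAntichain_of_intersecting hanti hint hk hm (by omega) (by simpa using hmn)
    exact hcard.trans (ih ℬ hℬanti hℬint (fun B hB => by have := hℬk B hB; omega) hℬm)

/-- The members of size at most `m` form an intersecting family, and complementation maps the others
onto them. -/
theorem card_le_of_isAntichain_of_compl_mem {m : ℕ} {𝒮 : Finset (Finset (Fin (2 * m + 1)))}
    (hanti : IsAntichain (· ⊆ ·) (𝒮 : Set (Finset (Fin (2 * m + 1)))))
    (hcompl : ∀ A ∈ 𝒮, Aᶜ ∈ 𝒮) : #𝒮 ≤ 2 * (2 * m).choose (m + 1) := by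
  set 𝒮₁ := 𝒮.filter (#· ≤ m)
  have hcard_compl : ∀ A : Finset (Fin (2 * m + 1)), #Aᶜ = 2 * m + 1 - #A := fun A => by
    rw [card_compl, Fintype.card_fin]
  have hsplit : #𝒮 ≤ 2 * #𝒮₁ := by
    have h : 𝒮 ⊆ 𝒮₁ ∪ 𝒮₁.image compl := by
      intro A hA
      by_cases hAm : #A ≤ m
      · exact mem_union_left _ (mem_filter.2 ⟨hA, hAm⟩)
      · refine mem_union_right _ (mem_image.2 ⟨Aᶜ, mem_filter.2 ⟨hcompl A hA, ?_⟩, compl_compl A⟩)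
        rw [hcard_compl]
        omega
    calc #𝒮 ≤ #(𝒮₁ ∪ 𝒮₁.image compl) := card_le_card h
      _ ≤ #𝒮₁ + #(𝒮₁.image compl) := card_union_le _ _
      _ ≤ 2 * #𝒮₁ := by have := card_image_le (s := 𝒮₁) (f := compl); omega
  have hint : (𝒮₁ : Set (Finset (Fin (2 * m + 1)))).Intersecting := by
    intro A hA B hB hAB
    obtain ⟨hA, hAm⟩ := mem_filter.1 hA
    obtain ⟨hB, hBm⟩ := mem_filter.1 hB
    refine hanti hA (hcompl B hB) (fun h => ?_) (subset_compl_iff_disjoint_right.2 hAB)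
    have := hcard_compl B
    rw [← h] at this
    omega
  have hanti₁ := hanti.subset (coe_subset.2 (filter_subset (#· ≤ m) 𝒮))
  rcases Nat.eq_zero_or_pos m with rfl | hm
  · have : 𝒮₁ = ∅ := eq_empty_of_forall_notMem fun A hA => by
      have hA0 : A = ∅ := card_eq_zero.1 (Nat.le_zero.1 (mem_filter.1 hA).2)
      exact hint.bot_notMem (by rw [bot_eq_empty, ← hA0]; exact hA)
    simpa [this] using hsplit
  · have h₁ : #𝒮₁ ≤ (2 * m + 1 - 1).choose (m - 1) :=
      card_le_choose_of_isAntichain_of_intersecting hanti₁ hint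
        (fun A hA => (mem_filter.1 hA).2) (by omega)
    rw [Nat.add_sub_cancel, Nat.choose_symm_of_eq_add (by omega : 2 * m = (m - 1) + (m + 1))]
      at h₁
    omega

theorem exists_forall_inner_ne_zero {ι E : Type*} [NormedAddCommGroup E] [InnerProductSpace ℝ E]
    [Finite ι] {v : ι → E} (hv : ∀ j, v j ≠ 0) : ∃ u : E, ∀ j, ⟪u, v j⟫ ≠ 0 := by
  by_contra! h
  obtain ⟨j, hj⟩ := Subspace.exists_eq_top_of_iUnion_eq_univ (p := fun j => (ℝ ∙ v j)ᗮ) <| by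
    refine Set.eq_univ_of_forall fun u => ?_
    obtain ⟨j, hj⟩ := h u
    exact Set.mem_iUnion.2 ⟨j, Submodule.mem_orthogonal_singleton_iff_inner_left.2 hj⟩
  exact hv j (by simpa [Submodule.orthogonal_eq_top_iff] using hj)

section SignSolutions

variable {ι E F : Type*} [DecidableEq ι]

def signVec (t : Finset ι) (j : ι) : ℝ := if j ∈ t then 1 else -1

theorem signVec_mul_self (t : Finset ι) (j : ι) : signVec t j * signVec t j = 1 := by
  by_cases h : j ∈ t <;> simp [signVec, h]

theorem signVec_symmDiff (s t : Finset ι) (j : ι) :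
    signVec (s ∆ t) j = -(signVec s j * signVec t j) := by
  by_cases hs : j ∈ s <;> by_cases ht : j ∈ t <;> simp [signVec, mem_symmDiff, hs, ht]

variable [Fintype ι]

theorem signVec_compl (t : Finset ι) : signVec tᶜ = -signVec t := by
  ext j
  by_cases h : j ∈ t <;> simp [signVec, h]

theorem sum_signVec (t : Finset ι) : ∑ j, signVec t j = 2 * #t - Fintype.card ι := by
  have h : ∀ j, signVec t j = 2 * (if j ∈ t then 1 else 0) - 1 := fun j => by
    by_cases hj : j ∈ t <;> norm_num [signVec, hj]
  simp [h, sum_sub_distrib, mul_comm]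

variable [AddCommGroup E] [Module ℝ E] [AddCommGroup F] [Module ℝ F]

open Classical in
noncomputable def signSolutions (w : ι → E) : Finset (Finset ι) :=
  univ.filter fun t => ∑ j, signVec t j • w j = 0

theorem mem_signSolutions {w : ι → E} {t : Finset ι} :
    t ∈ signSolutions w ↔ ∑ j, signVec t j • w j = 0 := by
  simp [signSolutions]

theorem compl_mem_signSolutions {w : ι → E} {t : Finset ι} (ht : t ∈ signSolutions w) :
    tᶜ ∈ signSolutions w := by
  rw [mem_signSolutions] at ht ⊢
  simp [signVec_compl, neg_smul, sum_neg_distrib, ht]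

theorem signSolutions_subset_comp (w : ι → E) (f : E →ₗ[ℝ] F) :
    signSolutions w ⊆ signSolutions (f ∘ w) := by
  intro t ht
  rw [mem_signSolutions] at ht ⊢
  simpa using congrArg f ht

theorem card_signSolutions_abs (a : ι → ℝ) : #(signSolutions (|a ·|)) = #(signSolutions a) := by
  set T := univ.filter fun j => a j < 0
  have ha : ∀ j, a j = -(signVec T j * |a j|) := fun j => by
    by_cases h : a j < 0
    · simp [T, signVec, h, abs_of_neg h]
    · simp [T, signVec, h, abs_of_nonneg (not_lt.1 h)]
  have hflip : ∀ t, (t ∆ T ∈ signSolutions a ↔ t ∈ signSolutions (|a ·|)) := fun t => by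
    simp only [mem_signSolutions, smul_eq_mul]
    rw [sum_congr rfl fun j _ => show signVec (t ∆ T) j * a j = signVec t j * |a j| by
      conv_lhs => rw [ha j]
      rw [signVec_symmDiff]
      linear_combination (signVec t j * |a j|) * signVec_mul_self T j]
  refine card_nbij' (· ∆ T) (· ∆ T) (fun t ht => (hflip t).2 ht) (fun t ht => ?_) ?_ ?_
  · rw [mem_coe, ← hflip, symmDiff_symmDiff_cancel_right]; exact ht
  · intro t _; simp [symmDiff_symmDiff_cancel_right]
  · intro t _; simp [symmDiff_symmDiff_cancel_right]

theorem isAntichain_signSolutions {b : ι → ℝ} (hb : ∀ j, 0 < b j) :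
    IsAntichain (· ⊆ ·) (signSolutions b : Set (Finset ι)) := by
  intro s hs t ht hne hst
  rw [mem_coe, mem_signSolutions] at hs ht
  simp only [smul_eq_mul] at hs ht
  have hdiff : ∑ j, (signVec t j - signVec s j) * b j = 0 := by
    simp only [sub_mul, sum_sub_distrib, hs, ht, sub_zero]
  have hterm : ∀ j ∈ univ, 0 ≤ (signVec t j - signVec s j) * b j := fun j _ => by
    refine mul_nonneg (sub_nonneg.2 ?_) (hb j).le
    by_cases hjs : j ∈ s
    · simp [signVec, hjs, hst hjs]
    · unfold signVec; split_ifs <;> norm_num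
  refine hne (hst.antisymm fun j hjt => by_contra fun hjs => ?_)
  have := (sum_eq_zero_iff_of_nonneg hterm).1 hdiff j (mem_univ j)
  simp [signVec, hjs, hjt] at this
  linarith [hb j]

end SignSolutions

theorem card_signSolutions_le {E : Type*} [NormedAddCommGroup E] [InnerProductSpace ℝ E] {m : ℕ}
    {v : Fin (2 * m + 1) → E} (hv : ∀ j, v j ≠ 0) :
    #(signSolutions v) ≤ 2 * (2 * m).choose (m + 1) := by
  obtain ⟨u, hu⟩ := exists_forall_inner_ne_zero hv
  calc #(signSolutions v) ≤ #(signSolutions (innerₗ E u ∘ v)) :=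
        card_le_card (signSolutions_subset_comp v _)
    _ = #(signSolutions (|⟪u, v ·⟫|)) := (card_signSolutions_abs _).symm
    _ ≤ 2 * (2 * m).choose (m + 1) :=
        card_le_of_isAntichain_of_compl_mem (isAntichain_signSolutions fun j => abs_pos.2 (hu j))
          fun _ => compl_mem_signSolutions

theorem le_card_signSolutions_snoc (m : ℕ) :
    2 * (2 * m).choose (m + 1) ≤
      #(signSolutions (Fin.snoc (fun _ => 1 / 2) 1 : Fin (2 * m + 1) → ℝ)) := by
  set V := (powersetCard (m + 1) (univ : Finset (Fin (2 * m)))).image (·.map Fin.castSuccEmb)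
  have hV : ∀ t ∈ V, t ∈ signSolutions (Fin.snoc (fun _ => 1 / 2) 1 : Fin (2 * m + 1) → ℝ) ∧
      Fin.last (2 * m) ∉ t := by
    intro t ht
    obtain ⟨s, hs, rfl⟩ := mem_image.1 ht
    have hlast : Fin.last (2 * m) ∉ s.map Fin.castSuccEmb := by simp
    refine ⟨?_, hlast⟩
    have hsum := sum_signVec s
    rw [(mem_powersetCard.1 hs).2, Fintype.card_fin] at hsum
    have hcast : ∀ i, signVec (s.map Fin.castSuccEmb) i.castSucc = signVec s i := by
      simp [signVec]
    have hlast' : signVec (s.map Fin.castSuccEmb) (Fin.last (2 * m)) = -1 := if_neg hlast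
    rw [mem_signSolutions, Fin.sum_univ_castSucc]
    simp only [hcast, hlast', Fin.snoc_castSucc, Fin.snoc_last, smul_eq_mul, ← sum_mul, hsum]
    push_cast
    ring
  have hdisj : Disjoint V (V.image compl) := disjoint_left.2 fun t ht ht' => by
    obtain ⟨s, hs, rfl⟩ := mem_image.1 ht'
    exact (hV _ ht).2 (mem_compl.2 (hV s hs).2)
  calc 2 * (2 * m).choose (m + 1) = #V + #(V.image compl) := by
        rw [card_image_of_injective _ compl_injective, card_image_of_injective _ (map_injective _),
          card_powersetCard, card_univ, Fintype.card_fin]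
        ring
    _ = #(V ∪ V.image compl) := (card_union_of_disjoint hdisj).symm
    _ ≤ _ := card_le_card <| union_subset (fun t ht => (hV t ht).1) fun t ht => by
        obtain ⟨s, hs, rfl⟩ := mem_image.1 ht
        exact compl_mem_signSolutions (hV s hs).1

section Rademacher

variable {Ω ι : Type*} [Fintype ι] [DecidableEq ι] {ε : ι → Ω → ℝ}

noncomputable def signPattern (ε : ι → Ω → ℝ) (ω : Ω) : Finset ι := univ.filter fun j => ε j ω = 1

theorem signPattern_preimage_singleton (t : Finset ι) :
    signPattern ε ⁻¹' {t} = ⋂ j ∈ univ, ε j ⁻¹' (if j ∈ t then {1} else {1}ᶜ) := by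
  ext ω
  simp only [Set.mem_preimage, Set.mem_singleton_iff, Set.mem_iInter, Finset.ext_iff, signPattern,
    mem_filter, mem_univ, true_and, forall_const]
  refine forall_congr' fun j => ?_
  by_cases hj : j ∈ t <;> simp [hj]

variable [MeasurableSpace Ω] {μ : Measure Ω} [IsProbabilityMeasure μ]

theorem IsRademacher.measure_ne_one {f : Ω → ℝ} (hf : Measurable f) (h : IsRademacher μ f) :
    μ {ω | f ω ≠ 1} = 1 / 2 := by
  rw [← Set.compl_ofPred,
    prob_compl_eq_one_sub (s := {ω | f ω = 1}) (hf (measurableSet_singleton 1)), h.1, one_div,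
    ENNReal.one_sub_inv_two]

theorem IsRademacher.ae_eq_one_or_eq_neg_one {f : Ω → ℝ} (hf : Measurable f)
    (h : IsRademacher μ f) : ∀ᵐ ω ∂μ, f ω = 1 ∨ f ω = -1 := by
  have hdisj : Disjoint {ω | f ω = 1} {ω | f ω = -1} :=
    Set.disjoint_left.2 fun ω (h₁ : f ω = 1) (h₂ : f ω = -1) => by norm_num [h₁] at h₂
  have hmeas₂ := hf (measurableSet_singleton (-1))
  have hunion : μ ({ω | f ω = 1} ∪ {ω | f ω = -1}) = μ Set.univ := by
    rw [measure_union hdisj hmeas₂, h.1, h.2, ENNReal.add_halves, measure_univ]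
  exact (ae_mem_iff_measure_eq
    ((hf (measurableSet_singleton 1)).union hmeas₂).nullMeasurableSet).2 hunion

theorem measure_signPattern_preimage_singleton (hmeas : ∀ j, Measurable (ε j))
    (hindep : iIndepFun ε μ) (hrad : ∀ j, IsRademacher μ (ε j)) (t : Finset ι) :
    μ (signPattern ε ⁻¹' {t}) = (1 / 2) ^ Fintype.card ι := by
  rw [signPattern_preimage_singleton, hindep.measure_inter_preimage_eq_mul _ fun j _ => by
    split_ifs <;> measurability]
  rw [← card_univ, ← prod_const]
  refine prod_congr rfl fun j _ => ?_
  split_ifs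
  · exact (hrad j).1
  · exact (hrad j).measure_ne_one (hmeas j)

theorem measure_sum_smul_eq_zero {E : Type*} [AddCommGroup E] [Module ℝ E]
    (hmeas : ∀ j, Measurable (ε j)) (hindep : iIndepFun ε μ) (hrad : ∀ j, IsRademacher μ (ε j))
    (w : ι → E) :
    μ {ω | ∑ j, ε j ω • w j = 0} = #(signSolutions w) * (1 / 2) ^ Fintype.card ι := by
  have hsigns : ∀ᵐ ω ∂μ, ∀ j, ε j ω = signVec (signPattern ε ω) j :=
    ae_all_iff.2 fun j => ((hrad j).ae_eq_one_or_eq_neg_one (hmeas j)).mono fun ω hω => by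
      rcases hω with h | h <;> simp [signVec, signPattern, h]
  calc μ {ω | ∑ j, ε j ω • w j = 0} = μ (signPattern ε ⁻¹' signSolutions w) :=
        measure_congr <| Filter.eventuallyEq_set.2 <| hsigns.mono fun ω hω => by
          simp only [Set.mem_ofPred_eq, Set.mem_preimage, mem_coe, mem_signSolutions, hω]
    _ = ∑ t ∈ signSolutions w, μ (signPattern ε ⁻¹' {t}) :=
        (sum_measure_preimage_singleton _ fun t _ => by
          rw [signPattern_preimage_singleton]
          measurability).symm
    _ = #(signSolutions w) * (1 / 2) ^ Fintype.card ι := by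
        simp [measure_signPattern_preimage_singleton hmeas hindep hrad]

end Rademacher

theorem littlewood_offord_zero_case_odd_general
    {Ω : Type*} [MeasurableSpace Ω] (μ : Measure Ω) [IsProbabilityMeasure μ]
    (d n : ℕ) (hn : Odd n) (v : ℕ → EuclideanSpace ℝ (Fin d))
    (hv0 : ∀ i < n, v i ≠ 0)
    (ε : ℕ → Ω → ℝ) (hmeas : ∀ i, Measurable (ε i))
    (hindep : iIndepFun ε μ)
    (hrad : ∀ i, IsRademacher μ (ε i)) :
    μ {ω | ∑ i ∈ Finset.range n, ε i ω • v i = 0}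
      ≤ μ {ω | (1 / 2) * ∑ i ∈ Finset.range (n - 1), ε i ω + ε (n - 1) ω = 0} := by
  obtain ⟨m, rfl⟩ := hn
  set w : Fin (2 * m + 1) → ℝ := Fin.snoc (fun _ => 1 / 2) 1
  have hlhs : {ω | ∑ i ∈ range (2 * m + 1), ε i ω • v i = 0} =
      {ω | ∑ j : Fin (2 * m + 1), ε j ω • v j = 0} := by
    simp_rw [sum_range]
  have hrhs : {ω | (1 / 2) * ∑ i ∈ range (2 * m + 1 - 1), ε i ω + ε (2 * m + 1 - 1) ω = 0} =
      {ω | ∑ j : Fin (2 * m + 1), ε j ω • w j = 0} := by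
    ext ω
    simp only [Set.mem_ofPred_eq, w, Fin.sum_univ_castSucc, sum_range, Fin.snoc_castSucc,
      Fin.snoc_last, smul_eq_mul, mul_one, Fin.val_castSucc, Fin.val_last, Nat.add_sub_cancel,
      ← sum_mul, mul_comm (1 / 2 : ℝ)]
  have hindep' := hindep.precomp (Fin.val_injective (n := 2 * m + 1))
  rw [hlhs, hrhs,
    measure_sum_smul_eq_zero (ε := fun j : Fin _ => ε j) (hmeas ·) hindep' (hrad ·),
    measure_sum_smul_eq_zero (ε := fun j : Fin _ => ε j) (hmeas ·) hindep' (hrad ·)]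
  refine mul_le_mul_left (Nat.cast_le.2 ?_) _
  exact (card_signSolutions_le fun j => hv0 j j.isLt).trans (le_card_signSolutions_snoc m)

theorem littlewood_offord_zero_case_odd
    {Ω : Type*} [MeasurableSpace Ω] (μ : Measure Ω) [IsProbabilityMeasure μ]
    (d n : ℕ) (hn : Odd n) (v : ℕ → EuclideanSpace ℝ (Fin d))
    (hv0 : ∀ i < n, v i ≠ 0) (hv1 : ∀ i < n, ‖v i‖ ≤ 1)
    (ε : ℕ → Ω → ℝ) (hmeas : ∀ i, Measurable (ε i))
    (hindep : iIndepFun ε μ)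
    (hrad : ∀ i, IsRademacher μ (ε i)) :
    μ {ω | ∑ i ∈ Finset.range n, ε i ω • v i = 0}
      ≤ μ {ω | (1 / 2) * ∑ i ∈ Finset.range (n - 1), ε i ω + ε (n - 1) ω = 0} :=
  littlewood_offord_zero_case_odd_general μ d n hn v hv0 ε hmeas hindep hrad
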